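/- arXiv:1902.06434 — 2 statements merged into one kernel-verified Lean document; each statement's English description precedes it below -/
import Mathlib

section
/- Let 1<p,q<∞ with 1/p+1/q=1 and let μ be a compactly supported Borel probability measure on ℝ (support in [-M,M]). Let Λ = {λ_n : n∈ℕ} and Ω = {ω_n : n∈ℕ} be subsets of ℝ such that |λ_n − ω_n| ≤ C for all n. If {e_{λ_n}}_{n∈ℕ} is a q-Bessel for L^p(μ) with bound B, then {e_{ω_n}}_{n∈ℕ} is a q-Bessel for L^p(μ) with bound ( B^{1/q} + ( B (e^{C^p} − 1)^{q−1} (e^{(2πM)^q} − 1) )^{1/q} )^q. -/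
/-!
Taylor-expanding the entire function `t ↦ (f dμ)^(t)` around `λ_n` gives
`(f dμ)^(ω_n) = ∑_k (2πi(λ_n - ω_n))^k / k! · (x^k f dμ)^(λ_n)`. Since `|x| ≤ M` on the support,
`‖x^k f‖_p ≤ M^k ‖f‖_p`, so the Bessel bound for `{e_{λ_n}}` applied to each `x^k f` and
Minkowski's inequality in `ℓ^q` give `‖((f dμ)^(ω_n))_n‖_q ≤ B^{1/q} e^{2πCM} ‖f‖_p`. Finally
Hölder's inequality applied to the exponential series splits `e^{ab} ≤ 1 + (e^{a^p} - 1)^{1/p}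
(e^{b^q} - 1)^{1/q}`, with `a = C` and `b = 2πM`.
-/

open MeasureTheory Complex Filter
open scoped ENNReal NNReal Real

/-- The Fourier transform of the measure `f dμ` on `ℝ` at `t`. -/
noncomputable def FT1 (μ : Measure ℝ) (f : ℝ → ℂ) (t : ℝ) : ℂ :=
  ∫ x, f x * Complex.exp (-(2 * Real.pi * t * x : ℝ) * Complex.I) ∂μ

open scoped Nat

noncomputable def lqNorm {ι : Type*} (q : ℝ) (f : ι → ℝ≥0∞) : ℝ≥0∞ :=
  (∑' i, f i ^ q) ^ (1 / q)

section lqNorm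

variable {ι κ : Type*} {q : ℝ}

theorem lqNorm_le_iff (hq : 0 < q) {f : ι → ℝ≥0∞} {R : ℝ≥0∞} :
    lqNorm q f ≤ R ↔ ∑' i, f i ^ q ≤ R ^ q := by
  rw [lqNorm, one_div, ENNReal.rpow_inv_le_iff hq]

theorem lqNorm_mono (hq : 0 ≤ q) {f g : ι → ℝ≥0∞} (hfg : f ≤ g) : lqNorm q f ≤ lqNorm q g := by
  unfold lqNorm
  gcongr with i
  exact hfg i

theorem lqNorm_const_mul (hq : 0 < q) (c : ℝ≥0∞) (f : ι → ℝ≥0∞) :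
    lqNorm q (fun i => c * f i) = c * lqNorm q f := by
  simp only [lqNorm, ENNReal.mul_rpow_of_nonneg _ _ hq.le, ENNReal.tsum_mul_left,
    ENNReal.mul_rpow_of_nonneg _ _ (one_div_nonneg.2 hq.le), ← ENNReal.rpow_mul,
    mul_one_div_cancel hq.ne', ENNReal.rpow_one]

theorem lqNorm_add_le (hq : 1 ≤ q) (f g : ι → ℝ≥0∞) :
    lqNorm q (f + g) ≤ lqNorm q f + lqNorm q g := by
  have hq0 : 0 < q := zero_lt_one.trans_le hq
  rw [lqNorm_le_iff hq0]
  refine ENNReal.summable.tsum_le_of_sum_le fun s => (ENNReal.rpow_inv_le_iff hq0).1 ?_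
  rw [← one_div]
  refine (ENNReal.Lp_add_le s f g hq).trans ?_
  unfold lqNorm
  gcongr <;> exact ENNReal.sum_le_tsum s

theorem lqNorm_finset_sum_le (hq : 1 ≤ q) (F : κ → ι → ℝ≥0∞) (s : Finset κ) :
    lqNorm q (∑ k ∈ s, F k) ≤ ∑ k ∈ s, lqNorm q (F k) := by
  classical
  induction s using Finset.induction with
  | empty =>
    have hq0 : 0 < q := zero_lt_one.trans_le hq
    simp [lqNorm, ENNReal.zero_rpow_of_pos hq0, hq0]
  | insert k s hk ih =>
    rw [Finset.sum_insert hk, Finset.sum_insert hk]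
    exact (lqNorm_add_le hq _ _).trans (add_le_add le_rfl ih)

theorem lqNorm_tsum_le (hq : 1 ≤ q) (F : κ → ι → ℝ≥0∞) :
    lqNorm q (fun i => ∑' k, F k i) ≤ ∑' k, lqNorm q (F k) := by
  have hq0 : 0 < q := zero_lt_one.trans_le hq
  rw [lqNorm_le_iff hq0]
  refine ENNReal.summable.tsum_le_of_sum_le fun t => ?_
  have hlim : Tendsto (fun s : Finset κ => ∑ i ∈ t, (∑ k ∈ s, F k i) ^ q) atTop
      (nhds (∑ i ∈ t, (∑' k, F k i) ^ q)) :=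
    tendsto_finsetSum t fun i _ =>
      (ENNReal.continuous_rpow_const.tendsto _).comp ENNReal.summable.hasSum
  refine le_of_tendsto' hlim fun s => ?_
  have hfin : lqNorm q (∑ k ∈ s, F k) ≤ ∑' k, lqNorm q (F k) :=
    (lqNorm_finset_sum_le hq F s).trans (ENNReal.sum_le_tsum s)
  rw [lqNorm_le_iff hq0] at hfin
  refine le_trans ?_ hfin
  simpa only [Finset.sum_apply] using ENNReal.sum_le_tsum t

end lqNorm

theorem Real.hasSum_pow_succ_div_factorial (x : ℝ) :
    HasSum (fun n : ℕ => x ^ (n + 1) / (n + 1)!) (Real.exp x - 1) := by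
  have h := (hasSum_nat_add_iff' 1).2 (NormedSpace.expSeries_div_hasSum_exp x)
  simpa [Real.exp_eq_exp_ℝ] using h

theorem Real.rpow_pow_div_factorial_rpow_inv {x r : ℝ} (hx : 0 ≤ x) (hr : r ≠ 0) (n : ℕ) :
    ((x ^ r) ^ n / n !) ^ r⁻¹ = x ^ n / (n ! : ℝ) ^ r⁻¹ := by
  rw [Real.div_rpow (by positivity) (by positivity), ← Real.rpow_mul_natCast hx,
    mul_comm, Real.rpow_natCast_mul hx, Real.rpow_rpow_inv (by positivity) hr]

theorem Real.exp_mul_le_one_add {p q a b : ℝ} (hpq : p.HolderConjugate q) (ha : 0 ≤ a)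
    (hb : 0 ≤ b) :
    Real.exp (a * b) ≤ 1 + (Real.exp (a ^ p) - 1) ^ (1 / p) * (Real.exp (b ^ q) - 1) ^ (1 / q) := by
  have hX : 0 ≤ Real.exp (a ^ p) - 1 := sub_nonneg.2 (Real.one_le_exp (by positivity))
  have hY : 0 ≤ Real.exp (b ^ q) - 1 := sub_nonneg.2 (Real.one_le_exp (by positivity))
  set u : ℕ → ℝ := fun n => ((a ^ p) ^ (n + 1) / (n + 1)!) ^ p⁻¹
  set v : ℕ → ℝ := fun n => ((b ^ q) ^ (n + 1) / (n + 1)!) ^ q⁻¹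
  have hu : HasSum (fun n => u n ^ p) (((Real.exp (a ^ p) - 1) ^ (1 / p)) ^ p) := by
    simp only [u, one_div, Real.rpow_inv_rpow hX hpq.ne_zero]
    convert Real.hasSum_pow_succ_div_factorial (a ^ p) using 2 with n
    exact Real.rpow_inv_rpow (by positivity) hpq.ne_zero
  have hv : HasSum (fun n => v n ^ q) (((Real.exp (b ^ q) - 1) ^ (1 / q)) ^ q) := by
    simp only [v, one_div, Real.rpow_inv_rpow hY hpq.symm.ne_zero]
    convert Real.hasSum_pow_succ_div_factorial (b ^ q) using 2 with n
    exact Real.rpow_inv_rpow (by positivity) hpq.symm.ne_zero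
  obtain ⟨S, -, hS, hsum⟩ := Real.inner_le_Lp_mul_Lq_hasSum_of_nonneg hpq
    (Real.rpow_nonneg hX _) (Real.rpow_nonneg hY _) (fun n => by positivity)
    (fun n => by positivity) hu hv
  have huv : (fun n => u n * v n) = fun n : ℕ => (a * b) ^ (n + 1) / (n + 1)! := by
    ext n
    simp only [u, v, Real.rpow_pow_div_factorial_rpow_inv ha hpq.ne_zero,
      Real.rpow_pow_div_factorial_rpow_inv hb hpq.symm.ne_zero]
    have hfac : ((n + 1)! : ℝ) ^ p⁻¹ * ((n + 1)! : ℝ) ^ q⁻¹ = (n + 1)! := by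
      rw [← Real.rpow_add (by positivity), hpq.inv_add_inv_eq_one, Real.rpow_one]
    rw [div_mul_div_comm, hfac, mul_pow]
  rw [huv] at hsum
  have := hsum.unique (Real.hasSum_pow_succ_div_factorial (a * b))
  linarith

theorem Real.rpow_one_div_mul_exp_mul_le {p q a b B : ℝ} (hpq : p.HolderConjugate q) (hB : 0 ≤ B)
    (ha : 0 ≤ a) (hb : 0 ≤ b) :
    B ^ (1 / q) * Real.exp (a * b) ≤
      B ^ (1 / q) + (B * (Real.exp (a ^ p) - 1) ^ (q - 1) * (Real.exp (b ^ q) - 1)) ^ (1 / q) := by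
  have hX : 0 ≤ Real.exp (a ^ p) - 1 := sub_nonneg.2 (Real.one_le_exp (by positivity))
  have hY : 0 ≤ Real.exp (b ^ q) - 1 := sub_nonneg.2 (Real.one_le_exp (by positivity))
  have hexpo : (q - 1) * (1 / q) = 1 / p := by
    rw [mul_one_div, sub_div, div_self hpq.symm.ne_zero, one_div, one_div, hpq.symm.one_sub_inv]
  have hsplit : (B * (Real.exp (a ^ p) - 1) ^ (q - 1) * (Real.exp (b ^ q) - 1)) ^ (1 / q) =
      B ^ (1 / q) * ((Real.exp (a ^ p) - 1) ^ (1 / p) * (Real.exp (b ^ q) - 1) ^ (1 / q)) := by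
    rw [Real.mul_rpow (by positivity) hY, Real.mul_rpow hB (by positivity), ← Real.rpow_mul hX,
      hexpo, mul_assoc]
  rw [hsplit, ← mul_one_add]
  exact mul_le_mul_of_nonneg_left (Real.exp_mul_le_one_add hpq ha hb) (by positivity)

theorem ENNReal.tsum_ofReal_pow_div_factorial {x : ℝ} (hx : 0 ≤ x) :
    ∑' k : ℕ, ENNReal.ofReal (x ^ k / k !) = ENNReal.ofReal (Real.exp x) := by
  rw [← ENNReal.ofReal_tsum_of_nonneg (fun k => by positivity) (Real.summable_pow_div_factorial x),
    Real.exp_eq_exp_ℝ, NormedSpace.exp_eq_tsum_div]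

section FourierTaylor

variable {μ : Measure ℝ} {f : ℝ → ℂ} {M : ℝ}

theorem norm_mul_exp_neg_two_pi_mul_I (z : ℂ) (t x : ℝ) :
    ‖z * Complex.exp (-(2 * Real.pi * t * x : ℝ) * Complex.I)‖ = ‖z‖ := by
  rw [norm_mul, ← ofReal_neg, norm_exp_ofReal_mul_I, mul_one]

theorem ae_norm_ofReal_pow_mul_le (hM : ∀ᵐ x ∂μ, |x| ≤ M) (k : ℕ) :
    ∀ᵐ x : ℝ ∂μ, ‖(x : ℂ) ^ k * f x‖ ≤ M ^ k * ‖f x‖ := by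
  filter_upwards [hM] with x hx
  rw [norm_mul, norm_pow, norm_real, Real.norm_eq_abs]
  gcongr

theorem MeasureTheory.MemLp.ofReal_pow_mul {p : ℝ≥0∞} (hf : MemLp f p μ) (hM : ∀ᵐ x ∂μ, |x| ≤ M)
    (k : ℕ) :
    MemLp (fun x : ℝ => (x : ℂ) ^ k * f x) p μ :=
  hf.of_le_mul ((continuous_ofReal.pow k).aestronglyMeasurable.mul hf.1)
    (ae_norm_ofReal_pow_mul_le hM k)

theorem MeasureTheory.Integrable.ofReal_pow_mul (hf : Integrable f μ) (hM : ∀ᵐ x ∂μ, |x| ≤ M)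
    (k : ℕ) :
    Integrable (fun x : ℝ => (x : ℂ) ^ k * f x) μ :=
  (hf.norm.const_mul (M ^ k)).mono'
    ((continuous_ofReal.pow k).aestronglyMeasurable.mul hf.1) (ae_norm_ofReal_pow_mul_le hM k)

theorem integrable_mul_exp_neg_two_pi_mul_I (hf : Integrable f μ) (t : ℝ) :
    Integrable (fun x : ℝ => f x * Complex.exp (-(2 * Real.pi * t * x : ℝ) * Complex.I)) μ :=
  have hcont : Continuous fun x : ℝ => Complex.exp (-(2 * Real.pi * t * x : ℝ) * Complex.I) := by
    fun_prop
  hf.norm.mono' (hf.1.mul hcont.aestronglyMeasurable)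
    (Eventually.of_forall fun x => (norm_mul_exp_neg_two_pi_mul_I _ t x).le)

theorem FT1_eq_tsum (hf : Integrable f μ) (hM : ∀ᵐ x ∂μ, |x| ≤ M) (l w : ℝ) :
    FT1 μ f w = ∑' k : ℕ, ((2 * Real.pi * (l - w) : ℝ) * Complex.I) ^ k / k ! *
      FT1 μ (fun x : ℝ => (x : ℂ) ^ k * f x) l := by
  set z : ℂ := (2 * Real.pi * (l - w) : ℝ) * Complex.I
  set F : ℕ → ℝ → ℂ := fun k x =>
    z ^ k / k ! * ((x : ℂ) ^ k * f x * Complex.exp (-(2 * Real.pi * l * x : ℝ) * Complex.I))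
  have hexp (u : ℂ) : Complex.exp u = ∑' k : ℕ, u ^ k / k ! := by
    rw [Complex.exp_eq_exp_ℂ, (NormedSpace.expSeries_div_hasSum_exp u).tsum_eq]
  have hpt (x : ℝ) : f x * Complex.exp (-(2 * Real.pi * w * x : ℝ) * Complex.I) = ∑' k, F k x := by
    have hshift : Complex.exp (-(2 * Real.pi * w * x : ℝ) * Complex.I) =
        Complex.exp (-(2 * Real.pi * l * x : ℝ) * Complex.I) * Complex.exp (z * x) := by
      rw [← Complex.exp_add]; simp only [z]; push_cast; ring_nf
    rw [hshift, hexp (z * x), ← mul_assoc, ← tsum_mul_left]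
    refine tsum_congr fun k => ?_
    simp only [F, mul_pow]
    ring
  have hint (k : ℕ) : Integrable (F k) μ :=
    (integrable_mul_exp_neg_two_pi_mul_I (hf.ofReal_pow_mul hM k) l).const_mul _
  have hsum : Summable fun k => ∫ x, ‖F k x‖ ∂μ := by
    refine Summable.of_nonneg_of_le (fun k => integral_nonneg fun x => norm_nonneg _) (fun k => ?_)
      ((Real.summable_pow_div_factorial (‖z‖ * M)).mul_right (∫ x, ‖f x‖ ∂μ))
    calc ∫ x, ‖F k x‖ ∂μ = ∫ x, ‖z‖ ^ k / k ! * ‖(x : ℂ) ^ k * f x‖ ∂μ := by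
          refine integral_congr_ae (Eventually.of_forall fun x => ?_)
          simp only [F]
          rw [norm_mul (z ^ k / _), norm_mul_exp_neg_two_pi_mul_I, norm_div, norm_pow, norm_natCast]
      _ ≤ ∫ x, ‖z‖ ^ k / k ! * (M ^ k * ‖f x‖) ∂μ := by
          refine integral_mono_ae ((hf.ofReal_pow_mul hM k).norm.const_mul _)
            ((hf.norm.const_mul _).const_mul _) ?_
          filter_upwards [ae_norm_ofReal_pow_mul_le hM k] with x hx
          gcongr
      _ = (‖z‖ * M) ^ k / k ! * ∫ x, ‖f x‖ ∂μ := by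
          rw [integral_const_mul, integral_const_mul, mul_pow]
          ring
  rw [FT1, integral_congr_ae (Eventually.of_forall hpt),
    ← integral_tsum_of_summable_integral_norm hint hsum]
  exact tsum_congr fun k => integral_const_mul _ _

theorem enorm_FT1_le_tsum (hf : Integrable f μ) (hM : ∀ᵐ x ∂μ, |x| ≤ M) {l w C : ℝ}
    (hlw : |l - w| ≤ C) :
    ‖FT1 μ f w‖ₑ ≤ ∑' k : ℕ, ENNReal.ofReal ((2 * Real.pi * C) ^ k / k !) *
      ‖FT1 μ (fun x : ℝ => (x : ℂ) ^ k * f x) l‖ₑ := by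
  rw [FT1_eq_tsum hf hM l w]
  refine enorm_tsum_le_tsum_enorm.trans (ENNReal.tsum_le_tsum fun k => ?_)
  rw [enorm_mul, ← ofReal_norm]
  gcongr
  rw [norm_div, norm_pow, norm_mul, norm_real, norm_I, mul_one, norm_natCast, Real.norm_eq_abs,
    abs_mul, abs_of_pos Real.two_pi_pos]
  gcongr

end FourierTaylor

/-- `D` bounds the `ℓ^q` norm, so a `q`-Bessel family with bound `B` in the sense of the
statement has `D = B^{1/q}`. -/
def IsBessel {ι : Type*} (μ : Measure ℝ) (p : ℝ≥0∞) (q : ℝ) (lam : ι → ℝ) (D : ℝ≥0∞) : Prop :=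
  ∀ f : ℝ → ℂ, MemLp f p μ → lqNorm q (fun n => ‖FT1 μ f (lam n)‖ₑ) ≤ D * eLpNorm f p μ

theorem IsBessel.of_abs_sub_le {ι : Type*} {μ : Measure ℝ} [IsFiniteMeasure μ] {p : ℝ≥0∞} {q : ℝ}
    (hp : 1 ≤ p) (hq : 1 ≤ q) {M C : ℝ} (hM0 : 0 ≤ M) (hM : ∀ᵐ x ∂μ, |x| ≤ M) (hC : 0 ≤ C)
    {lam ω : ι → ℝ} (hclose : ∀ n, |lam n - ω n| ≤ C) {D : ℝ≥0∞} (hB : IsBessel μ p q lam D) :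
    IsBessel μ p q ω (D * ENNReal.ofReal (Real.exp (2 * Real.pi * C * M))) := by
  intro f hf
  have hq0 : 0 < q := zero_lt_one.trans_le hq
  set A : ℕ → ℝ≥0∞ := fun k => ENNReal.ofReal ((2 * Real.pi * C) ^ k / k !)
  have hAM (k : ℕ) : A k * ENNReal.ofReal (M ^ k) =
      ENNReal.ofReal ((2 * Real.pi * C * M) ^ k / k !) := by
    rw [← ENNReal.ofReal_mul (by positivity), mul_pow]
    ring_nf
  calc lqNorm q (fun n => ‖FT1 μ f (ω n)‖ₑ)
      ≤ lqNorm q (fun n => ∑' k, A k * ‖FT1 μ (fun x : ℝ => (x : ℂ) ^ k * f x) (lam n)‖ₑ) :=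
        lqNorm_mono hq0.le fun n => enorm_FT1_le_tsum (hf.integrable hp) hM (hclose n)
    _ ≤ ∑' k, lqNorm q (fun n => A k * ‖FT1 μ (fun x : ℝ => (x : ℂ) ^ k * f x) (lam n)‖ₑ) :=
        lqNorm_tsum_le hq _
    _ = ∑' k, A k * lqNorm q (fun n => ‖FT1 μ (fun x : ℝ => (x : ℂ) ^ k * f x) (lam n)‖ₑ) :=
        tsum_congr fun k => lqNorm_const_mul hq0 _ _
    _ ≤ ∑' k, A k * (D * (ENNReal.ofReal (M ^ k) * eLpNorm f p μ)) := by
        gcongr with k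
        exact (hB _ (hf.ofReal_pow_mul hM k)).trans
          (by gcongr; exact eLpNorm_le_mul_eLpNorm_of_ae_le_mul (ae_norm_ofReal_pow_mul_le hM k) p)
    _ = D * (∑' k : ℕ, ENNReal.ofReal ((2 * Real.pi * C * M) ^ k / k !)) * eLpNorm f p μ := by
        rw [← ENNReal.tsum_mul_left, ← ENNReal.tsum_mul_right]
        refine tsum_congr fun k => ?_
        rw [← hAM]
        ring
    _ = D * ENNReal.ofReal (Real.exp (2 * Real.pi * C * M)) * eLpNorm f p μ := by
        rw [ENNReal.tsum_ofReal_pow_div_factorial (by positivity)]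

theorem stmt6_general (p q : ℝ) (hp : 1 < p) (hpq : 1 / p + 1 / q = 1)
    (μ : Measure ℝ) [IsProbabilityMeasure μ] (M : ℝ) (hM : 0 < M)
    (hsupp : μ (Set.Icc (-M) M)ᶜ = 0)
    (lam ω : ℕ → ℝ) (C : ℝ) (hC : 0 < C) (hclose : ∀ n, |lam n - ω n| ≤ C)
    (B : ℝ) (hB : 0 < B)
    (hBessel : ∀ f : ℝ → ℂ, MemLp f (ENNReal.ofReal p) μ →
      ∑' n : ℕ, (‖FT1 μ f (lam n)‖₊ : ℝ≥0∞) ^ q ≤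
        ENNReal.ofReal B * (eLpNorm f (ENNReal.ofReal p) μ) ^ q) :
    ∀ f : ℝ → ℂ, MemLp f (ENNReal.ofReal p) μ →
      ∑' n : ℕ, (‖FT1 μ f (ω n)‖₊ : ℝ≥0∞) ^ q ≤
        ENNReal.ofReal
          ((B ^ (1 / q) +
              (B * (Real.exp (C ^ p) - 1) ^ (q - 1) *
                (Real.exp ((2 * Real.pi * M) ^ q) - 1)) ^ (1 / q)) ^ q) *
          (eLpNorm f (ENNReal.ofReal p) μ) ^ q := by
  intro f hf
  have hpq' : p.HolderConjugate q :=
    Real.holderConjugate_iff.2 ⟨hp, by simpa only [one_div] using hpq⟩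
  have hq0 : 0 < q := hpq'.symm.pos
  have hsuppM : ∀ᵐ x ∂μ, |x| ≤ M := by
    filter_upwards [mem_ae_iff.2 hsupp] with x hx using abs_le.2 hx
  have hlam : IsBessel μ (ENNReal.ofReal p) q lam (ENNReal.ofReal B ^ (1 / q)) := fun g hg => by
    rw [lqNorm_le_iff hq0, ENNReal.mul_rpow_of_nonneg _ _ hq0.le, ← ENNReal.rpow_mul,
      one_div_mul_cancel hq0.ne', ENNReal.rpow_one]
    exact hBessel g hg
  have hω := hlam.of_abs_sub_le (ENNReal.one_le_ofReal.2 hp.le) hpq'.symm.lt.le hM.le hsuppM hC.le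
    hclose f hf
  have hK := Real.rpow_one_div_mul_exp_mul_le hpq' hB.le hC.le (by positivity : 0 ≤ 2 * Real.pi * M)
  rw [lqNorm_le_iff hq0] at hω
  refine hω.trans ?_
  rw [← ENNReal.ofReal_rpow_of_nonneg ((by positivity : (0 : ℝ) ≤ _).trans hK) hq0.le,
    ← ENNReal.mul_rpow_of_nonneg _ _ hq0.le]
  gcongr
  rw [ENNReal.ofReal_rpow_of_nonneg hB.le (by positivity), ← ENNReal.ofReal_mul (by positivity)]
  exact ENNReal.ofReal_le_ofReal (by convert hK using 3; ring)

/-- Stability of `q`-Bessel families of exponentials under perturbation of frequencies: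
if `|λ_n − ω_n| ≤ C` and `{e_{λ_n}}` is a `q`-Bessel for `L^p(μ)` with bound `B`
(`μ` a probability measure supported in `[-M,M]`), then `{e_{ω_n}}` is a `q`-Bessel with bound
`(B^{1/q} + (B (e^{C^p}−1)^{q−1} (e^{(2πM)^q}−1))^{1/q})^q`. -/
theorem stmt6 (p q : ℝ) (hp : 1 < p) (hq : 1 < q) (hpq : 1 / p + 1 / q = 1)
    (μ : Measure ℝ) [IsProbabilityMeasure μ] (M : ℝ) (hM : 0 < M)
    (hsupp : μ (Set.Icc (-M) M)ᶜ = 0)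
    (lam ω : ℕ → ℝ) (C : ℝ) (hC : 0 < C) (hclose : ∀ n, |lam n - ω n| ≤ C)
    (B : ℝ) (hB : 0 < B)
    (hBessel : ∀ f : ℝ → ℂ, MemLp f (ENNReal.ofReal p) μ →
      ∑' n : ℕ, (‖FT1 μ f (lam n)‖₊ : ℝ≥0∞) ^ q ≤
        ENNReal.ofReal B * (eLpNorm f (ENNReal.ofReal p) μ) ^ q) :
    ∀ f : ℝ → ℂ, MemLp f (ENNReal.ofReal p) μ →
      ∑' n : ℕ, (‖FT1 μ f (ω n)‖₊ : ℝ≥0∞) ^ q ≤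
        ENNReal.ofReal
          ((B ^ (1 / q) +
              (B * (Real.exp (C ^ p) - 1) ^ (q - 1) *
                (Real.exp ((2 * Real.pi * M) ^ q) - 1)) ^ (1 / q)) ^ q) *
          (eLpNorm f (ENNReal.ofReal p) μ) ^ q :=
  stmt6_general p q hp hpq μ M hM hsupp lam ω C hC hclose B hB hBessel
end

section
/- Let 1<p,q<∞ with 1/p+1/q=1 and μ = χ_{[0,1]}dx + δ₂ on ℝ. Then for any constants B > A > 0, there is no (p,q)-frame measure ν for μ with bounds A, B; i.e., the set F_{A,B}(μ)_{p,q} is empty. -/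
open MeasureTheory Complex Filter
open scoped ENNReal NNReal Real

/-!
Testing the upper frame bound against the indicator of the atom `{2}` gives `|(f dμ)^| ≡ 1`,
so `ν(ℝ) ≤ B` and `ν` is finite. The modulated indicators `e^{-2πiTx} χ_{[0,1]}` all have norm
`1`, and their transforms are the translates `t ↦ (χ_{[0,1]})^(T + t)`, which tend to `0`
pointwise as `T → ∞` by the Riemann–Lebesgue lemma. Dominated convergence against the finite
measure `ν` then drives the right-hand side of the lower frame bound to `0`, contradicting `A > 0`.
-/

open FourierTransform Topology

noncomputable def modulate (T : ℝ) (f : ℝ → ℂ) (x : ℝ) : ℂ :=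
  Complex.exp (-(2 * π * T * x : ℝ) * I) * f x

lemma norm_exp_neg_ofReal_mul_I (r : ℝ) : ‖Complex.exp (-(r : ℂ) * I)‖ = 1 := by
  rw [← ofReal_neg, Complex.norm_exp_ofReal_mul_I]

lemma Measurable.modulate {f : ℝ → ℂ} (hf : Measurable f) (T : ℝ) :
    Measurable (modulate T f) :=
  (by fun_prop : Measurable fun x : ℝ => Complex.exp (-(2 * π * T * x : ℝ) * I)).mul hf

lemma eLpNorm_modulate (T : ℝ) (f : ℝ → ℂ) (p : ℝ≥0∞) (μ : Measure ℝ) :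
    eLpNorm (modulate T f) p μ = eLpNorm f p μ :=
  eLpNorm_congr_norm_ae <| ae_of_all _ fun x => by
    rw [modulate, norm_mul, norm_exp_neg_ofReal_mul_I, one_mul]

lemma FT1_modulate (μ : Measure ℝ) (T : ℝ) (f : ℝ → ℂ) (t : ℝ) :
    FT1 μ (modulate T f) t = FT1 μ f (T + t) := by
  unfold FT1 modulate
  congr 1 with x
  rw [mul_comm _ (f x), mul_assoc, ← Complex.exp_add]
  push_cast
  ring_nf

lemma FT1_indicator (μ : Measure ℝ) {s : Set ℝ} (hs : MeasurableSet s) (f : ℝ → ℂ) :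
    FT1 μ (s.indicator f) = FT1 (μ.restrict s) f := by
  ext t
  rw [FT1, FT1, ← integral_indicator hs]
  congr 1 with x
  by_cases hx : x ∈ s <;> simp [hx]

lemma FT1_volume (f : ℝ → ℂ) : FT1 volume f = 𝓕 f := by
  ext w
  rw [FT1, Real.fourier_real_eq_integral_exp_smul]
  congr 1 with v
  rw [smul_eq_mul, mul_comm]
  push_cast
  ring_nf

lemma FT1_volume_restrict {s : Set ℝ} (hs : MeasurableSet s) (f : ℝ → ℂ) :
    FT1 (volume.restrict s) f = 𝓕 (s.indicator f) := by
  rw [← FT1_indicator volume hs, FT1_volume]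

lemma enorm_FT1_indicator_singleton (μ : Measure ℝ) (a t : ℝ) (ha : μ {a} ≠ ∞) :
    ‖FT1 μ (Set.indicator {a} fun _ => (1 : ℂ)) t‖ₑ = μ {a} := by
  rw [FT1_indicator μ (measurableSet_singleton a), FT1, integral_singleton, enorm_smul,
    one_mul, ← ofReal_norm, ← ofReal_norm, norm_exp_neg_ofReal_mul_I, ENNReal.ofReal_one,
    mul_one, Real.norm_of_nonneg measureReal_nonneg, ofReal_measureReal ha]

lemma isFiniteMeasure_of_lintegral_enorm_FT1_indicator_singleton_ne_top {μ ν : Measure ℝ}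
    {a q : ℝ} (ha₀ : μ {a} ≠ 0) (ha : μ {a} ≠ ∞)
    (hν : ∫⁻ t, ‖FT1 μ (Set.indicator {a} fun _ => (1 : ℂ)) t‖ₑ ^ q ∂ν ≠ ∞) :
    IsFiniteMeasure ν := by
  simp only [enorm_FT1_indicator_singleton μ a _ ha, lintegral_const] at hν
  exact ⟨lt_top_iff_ne_top.2 fun h => hν <| by
    rw [h, ENNReal.mul_top (ENNReal.rpow_pos (pos_iff_ne_zero.2 ha₀) ha).ne']⟩

lemma eLpNorm_indicator_one_of_measure_eq_one {μ : Measure ℝ} {s : Set ℝ} (hs : MeasurableSet s)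
    (hμs : μ s = 1) {p : ℝ≥0∞} (hp : p ≠ 0) : eLpNorm (s.indicator fun _ => (1 : ℂ)) p μ = 1 := by
  rw [eLpNorm_indicator_const' hs (by simp [hμs]) hp, hμs]
  simp

lemma tendsto_lintegral_enorm_fourier_add_rpow {h : ℝ → ℂ} (hh : Integrable h) (ν : Measure ℝ)
    [IsFiniteMeasure ν] {q : ℝ} (hq : 0 < q) :
    Tendsto (fun T => ∫⁻ t, ‖𝓕 h (T + t)‖ₑ ^ q ∂ν) atTop (𝓝 0) := by
  have hcont : Continuous (𝓕 h) :=
    VectorFourier.fourierIntegral_continuous Real.continuous_fourierChar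
      (innerSL ℝ).continuous₂ hh
  have hbound (w : ℝ) : ‖𝓕 h w‖ₑ ≤ ∫⁻ v, ‖h v‖ₑ := by
    rw [Real.fourier_real_eq]
    refine (enorm_integral_le_lintegral_enorm _).trans (le_of_eq ?_)
    exact lintegral_congr fun v => by rw [← ofReal_norm, Circle.norm_smul, ofReal_norm]
  have hfin : (∫⁻ v, ‖h v‖ₑ) ^ q * ν Set.univ ≠ ∞ :=
    ENNReal.mul_ne_top (ENNReal.rpow_ne_top_of_nonneg hq.le hh.2.ne) (measure_ne_top ν _)
  have hlim (t : ℝ) : Tendsto (fun T => ‖𝓕 h (T + t)‖ₑ ^ q) atTop (𝓝 0) := by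
    have h0 := (Real.zero_at_infty_fourier h).comp
      ((tendsto_atTop_add_const_right _ t tendsto_id).mono_right atTop_le_cocompact)
    simpa [Function.comp_def, ENNReal.zero_rpow_of_pos hq] using
      ((ENNReal.continuous_rpow_const (y := q)).tendsto _).comp
        (continuous_enorm.tendsto _ |>.comp h0)
  simpa using tendsto_lintegral_filter_of_dominated_convergence (fun _ => (∫⁻ v, ‖h v‖ₑ) ^ q)
    (Eventually.of_forall fun T =>
      (hcont.comp (continuous_const_add T)).measurable.enorm.pow_const q)
    (Eventually.of_forall fun T => ae_of_all _ fun t => ENNReal.rpow_le_rpow (hbound _) hq.le)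
    (by simpa using hfin) (ae_of_all _ hlim)

lemma tendsto_lintegral_enorm_FT1_modulate_indicator {μ : Measure ℝ} {s : Set ℝ}
    (hs : MeasurableSet s) (hμs : μ.restrict s = volume.restrict s) (hvol : volume s ≠ ∞)
    (ν : Measure ℝ) [IsFiniteMeasure ν] {q : ℝ} (hq : 0 < q) :
    Tendsto (fun T => ∫⁻ t, ‖FT1 μ (modulate T (s.indicator fun _ => 1)) t‖ₑ ^ q ∂ν)
      atTop (𝓝 0) := by
  simpa only [FT1_modulate, FT1_indicator μ hs, hμs, FT1_volume_restrict hs] using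
    tendsto_lintegral_enorm_fourier_add_rpow
      ((integrable_indicator_iff hs).2 (integrableOn_const (C := (1 : ℂ)) hvol)) ν hq

lemma restrict_add_dirac_apply_singleton (s : Set ℝ) (a : ℝ) :
    (volume.restrict s + Measure.dirac a) {a} = 1 := by
  rw [Measure.add_apply, Measure.restrict_apply (measurableSet_singleton a),
    measure_mono_null Set.inter_subset_left Real.volume_singleton]
  simp

lemma restrict_add_dirac_restrict_of_notMem {s : Set ℝ} {a : ℝ} (ha : a ∉ s) :
    (volume.restrict s + Measure.dirac a).restrict s = volume.restrict s := by
  classical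
  rw [Measure.restrict_add, Measure.restrict_restrict_of_subset subset_rfl]
  simp [restrict_dirac, ha]

theorem stmt15_general (p q : ℝ) (hp : 1 < p) (hq : 1 < q)
    (A B : ℝ) (hA : 0 < A) :
    ¬ ∃ ν : Measure ℝ,
      ∀ f : ℝ → ℂ,
        MemLp f (ENNReal.ofReal p) (volume.restrict (Set.Icc (0 : ℝ) 1) + Measure.dirac 2) →
        ENNReal.ofReal A *
            (eLpNorm f (ENNReal.ofReal p)
              (volume.restrict (Set.Icc (0 : ℝ) 1) + Measure.dirac 2)) ^ q ≤
          ∫⁻ t, (‖FT1 (volume.restrict (Set.Icc (0 : ℝ) 1) + Measure.dirac 2) f t‖₊ : ℝ≥0∞) ^ q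
            ∂ν ∧
        ∫⁻ t, (‖FT1 (volume.restrict (Set.Icc (0 : ℝ) 1) + Measure.dirac 2) f t‖₊ : ℝ≥0∞) ^ q
            ∂ν ≤
          ENNReal.ofReal B *
            (eLpNorm f (ENNReal.ofReal p)
              (volume.restrict (Set.Icc (0 : ℝ) 1) + Measure.dirac 2)) ^ q := by
  rintro ⟨ν, hν⟩
  simp only [← enorm_eq_nnnorm] at hν
  set s := Set.Icc (0 : ℝ) 1
  set μ : Measure ℝ := volume.restrict s + Measure.dirac 2
  have hs : MeasurableSet s := measurableSet_Icc
  have hp₀ : ENNReal.ofReal p ≠ 0 := by simpa using hp.trans' zero_lt_one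
  have hμ_restrict : μ.restrict s = volume.restrict s :=
    restrict_add_dirac_restrict_of_notMem fun h => by norm_num [s] at h
  have hμ2 : μ {2} = 1 := restrict_add_dirac_apply_singleton s 2
  have hμs : μ s = 1 := by
    rw [← Measure.restrict_apply_self, hμ_restrict]
    simp [s]
  have h_atom := eLpNorm_indicator_one_of_measure_eq_one (measurableSet_singleton 2) hμ2 hp₀
  have h_box := eLpNorm_indicator_one_of_measure_eq_one hs hμs hp₀
  have : IsFiniteMeasure ν := by
    have h := (hν _ ⟨(measurable_const.indicator (measurableSet_singleton 2)).aestronglyMeasurable,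
      h_atom ▸ ENNReal.one_lt_top⟩).2
    rw [h_atom] at h
    exact isFiniteMeasure_of_lintegral_enorm_FT1_indicator_singleton_ne_top
      (by simp [hμ2]) (by simp [hμ2]) (h.trans_lt (by simp)).ne
  have h_lower (T : ℝ) : ENNReal.ofReal A ≤
      ∫⁻ t, ‖FT1 μ (modulate T (s.indicator fun _ => 1)) t‖ₑ ^ q ∂ν := by
    have hmeas : Measurable (modulate T (s.indicator fun _ => (1 : ℂ))) :=
      (measurable_const.indicator hs).modulate T
    have h_norm : eLpNorm (modulate T (s.indicator fun _ => (1 : ℂ))) (ENNReal.ofReal p) μ = 1 := by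
      rw [eLpNorm_modulate, h_box]
    simpa [h_norm] using (hν _ ⟨hmeas.aestronglyMeasurable, h_norm ▸ ENNReal.one_lt_top⟩).1
  have h_zero := ge_of_tendsto' (tendsto_lintegral_enorm_FT1_modulate_indicator hs hμ_restrict
    (by simp [s]) ν (zero_lt_one.trans hq)) h_lower
  simp only [nonpos_iff_eq_zero, ENNReal.ofReal_eq_zero] at h_zero
  linarith

/-- For `μ = χ_{[0,1]}dx + δ₂` and any `B > A > 0`, there is no `(p,q)`-frame measure `ν`
for `μ` with bounds `A, B`: the set `F_{A,B}(μ)_{p,q}` is empty. -/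
theorem stmt15 (p q : ℝ) (hp : 1 < p) (hq : 1 < q) (hpq : 1 / p + 1 / q = 1)
    (A B : ℝ) (hA : 0 < A) (hAB : A < B) :
    ¬ ∃ ν : Measure ℝ,
      ∀ f : ℝ → ℂ,
        MemLp f (ENNReal.ofReal p) (volume.restrict (Set.Icc (0 : ℝ) 1) + Measure.dirac 2) →
        ENNReal.ofReal A *
            (eLpNorm f (ENNReal.ofReal p)
              (volume.restrict (Set.Icc (0 : ℝ) 1) + Measure.dirac 2)) ^ q ≤
          ∫⁻ t, (‖FT1 (volume.restrict (Set.Icc (0 : ℝ) 1) + Measure.dirac 2) f t‖₊ : ℝ≥0∞) ^ q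
            ∂ν ∧
        ∫⁻ t, (‖FT1 (volume.restrict (Set.Icc (0 : ℝ) 1) + Measure.dirac 2) f t‖₊ : ℝ≥0∞) ^ q
            ∂ν ≤
          ENNReal.ofReal B *
            (eLpNorm f (ENNReal.ofReal p)
              (volume.restrict (Set.Icc (0 : ℝ) 1) + Measure.dirac 2)) ^ q :=
  stmt15_general p q hp hq A B hA
end
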